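/- If a tripartite no-signaling distribution p(a,b,e|x,y,z) over binary inputs and outputs satisfies β(A,B) = 1 (i.e., the A-B marginal is the PR-box), then the distribution factorizes as p(a,b,e|x,y,z) = p(a,b|x,y)·p(e|z); in particular β(B,E) = 1/2. -/

import Mathlib

/-!
Since Eve cannot signal, the A–B marginal is the same for every `z`, and CHSH value 1 forces it
to vanish off the PR support `a ⊕ b = x ∧ y`; by positivity so does `p` itself. For fixed `(e, z)`
the slice `p(·,·,e|·,·,z)` is then a subnormalized no-signaling box on the PR support, and every
such box is a multiple `m(e|z)` of the PR box. Hence `p = m(e|z) · PR`, which is the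
factorization, and Bob's output is a uniform bit independent of Eve, so `β(B,E) = 1/2`.
-/

/-- CHSH functional of a bipartite correlation q(o₁,o₂|i₁,i₂). -/
noncomputable def chsh (q : Bool → Bool → Bool → Bool → ℝ) : ℝ :=
  (1/4) * ∑ i₁ : Bool, ∑ i₂ : Bool, ∑ o₁ : Bool, ∑ o₂ : Bool,
    (if xor o₁ o₂ = (i₁ && i₂) then q o₁ o₂ i₁ i₂ else 0)

noncomputable def prBox (a b x y : Bool) : ℝ := if xor a b = (x && y) then 1/2 else 0

theorem sum_prBox_left (b x y : Bool) : ∑ a, prBox a b x y = 1/2 := by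
  cases b <;> cases x <;> cases y <;> norm_num [prBox]

theorem sum_sum_prBox (x y : Bool) : ∑ a, ∑ b, prBox a b x y = 1 := by
  cases x <;> cases y <;> norm_num [prBox]

theorem chsh_uniform_mul_eq_half {f : Bool → Bool → ℝ} (hf : ∀ i₂, ∑ o₂, f o₂ i₂ = 1) :
    chsh (fun _ o₂ _ i₂ => f o₂ i₂ * (1/2)) = 1/2 := by
  have h0 := hf false
  have h1 := hf true
  simp only [Fintype.sum_bool] at h0 h1
  norm_num [chsh, Fintype.sum_bool]
  linarith

theorem eq_zero_of_chsh_eq_one {q : Bool → Bool → Bool → Bool → ℝ}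
    (hq : ∀ a b x y, 0 ≤ q a b x y) (hnorm : ∀ x y, ∑ a, ∑ b, q a b x y = 1)
    (h : chsh q = 1) {a b x y : Bool} (hab : xor a b ≠ (x && y)) : q a b x y = 0 := by
  -- `chsh q` is `1` minus a quarter of the total weight of `q` off the PR support.
  have h00 := hnorm false false
  have h01 := hnorm false true
  have h10 := hnorm true false
  have h11 := hnorm true true
  simp only [chsh, Fintype.sum_bool] at h h00 h01 h10 h11
  norm_num at h
  cases a <;> cases b <;> cases x <;> cases y <;> grind

structure IsNoSignaling (q : Bool → Bool → Bool → Bool → ℝ) : Prop where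
  bob_marginal : ∀ b x x' y, ∑ a, q a b x y = ∑ a, q a b x' y
  alice_marginal : ∀ a x y y', ∑ b, q a b x y = ∑ b, q a b x y'

section
variable {r : Bool → Bool → Bool → Bool → ℝ}

theorem eq_sum_right_of_xor_eq (hsupp : ∀ a b x y, xor a b ≠ (x && y) → r a b x y = 0)
    {a b x y : Bool} (h : xor a b = (x && y)) : r a b x y = ∑ b', r a b' x y :=
  (Fintype.sum_eq_single b fun b' hb' => hsupp a b' x y (by rwa [← h, Ne, Bool.xor_right_inj])).symm

theorem eq_sum_left_of_xor_eq (hsupp : ∀ a b x y, xor a b ≠ (x && y) → r a b x y = 0)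
    {a b x y : Bool} (h : xor a b = (x && y)) : r a b x y = ∑ a', r a' b x y :=
  (Fintype.sum_eq_single a fun a' ha' => hsupp a' b x y (by rwa [← h, Ne, Bool.xor_left_inj])).symm

theorem IsNoSignaling.eq_of_xor_eq (hr : IsNoSignaling r)
    (hsupp : ∀ a b x y, xor a b ≠ (x && y) → r a b x y = 0)
    {a b x y : Bool} (h : xor a b = (x && y)) : r a b x y = r false false false false := by
  set α : Bool → Bool → ℝ := fun a x => ∑ b, r a b x false
  set β : Bool → Bool → ℝ := fun b y => ∑ a, r a b false y
  have hmarg : ∀ a b x y, xor a b = (x && y) → r a b x y = α a x ∧ r a b x y = β b y :=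
    fun a b x y h => ⟨(eq_sum_right_of_xor_eq hsupp h).trans (hr.alice_marginal a x y false),
      (eq_sum_left_of_xor_eq hsupp h).trans (hr.bob_marginal b x false y)⟩
  -- Around the four input pairs: `α a 1 = β a 0 = α a 0 = β a 1 = α (!a) 1`.
  have hα : ∀ a x, α a x = α false false := by
    have := hmarg true true false false rfl
    have := hmarg false false false false rfl
    have := hmarg true true true false rfl
    have := hmarg false false true false rfl
    have := hmarg true true false true rfl
    have := hmarg true false true true rfl
    have := hmarg false true true true rfl
    intro a x; cases a <;> cases x <;> linarith
  rw [(hmarg a b x y h).1, hα, ← (hmarg false false false false rfl).1]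

theorem IsNoSignaling.eq_mul_prBox (hr : IsNoSignaling r)
    (hsupp : ∀ a b x y, xor a b ≠ (x && y) → r a b x y = 0) (a b x y : Bool) :
    r a b x y = (∑ a', ∑ b', r a' b' false false) * prBox a b x y := by
  by_cases h : xor a b = (x && y)
  · have hmass : ∑ a', ∑ b', r a' b' false false = 2 * r false false false false := by
      simp only [Fintype.sum_bool, hsupp true false false false (by decide),
        hsupp false true false false (by decide), hr.eq_of_xor_eq hsupp (a := true) (b := true)
          (x := false) (y := false) rfl]
      ring
    rw [hmass, prBox, if_pos h, hr.eq_of_xor_eq hsupp h]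
    ring
  · rw [hsupp a b x y h, prBox, if_neg h, mul_zero]

end

theorem prbox_marginal_factorizes
    (p : Bool → Bool → Bool → Bool → Bool → Bool → ℝ)
    (hpos : ∀ a b e x y z, 0 ≤ p a b e x y z)
    (hnorm : ∀ x y z, ∑ a : Bool, ∑ b : Bool, ∑ e : Bool, p a b e x y z = 1)
    (hnsE : ∀ a b x y z z', ∑ e : Bool, p a b e x y z = ∑ e : Bool, p a b e x y z')
    (hnsA : ∀ b e x x' y z, ∑ a : Bool, p a b e x y z = ∑ a : Bool, p a b e x' y z)
    (hnsB : ∀ a e x y y' z, ∑ b : Bool, p a b e x y z = ∑ b : Bool, p a b e x y' z)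
    (hchshAB : chsh (fun a b x y => ∑ e : Bool, p a b e x y false) = 1) :
    (∀ a b e x y z, p a b e x y z
      = (∑ e' : Bool, p a b e' x y z) * (∑ a' : Bool, ∑ b' : Bool, p a' b' e x y z)) ∧
    chsh (fun b e y z => ∑ a : Bool, p a b e false y z) = 1/2 := by
  have hsupp : ∀ a b e x y z, xor a b ≠ (x && y) → p a b e x y z = 0 := by
    intro a b e x y z h
    have hAB : ∑ e, p a b e x y z = 0 := by
      rw [hnsE a b x y z false]
      exact eq_zero_of_chsh_eq_one (fun a b x y => Finset.sum_nonneg fun e _ => hpos a b e x y false)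
        (fun x y => hnorm x y false) hchshAB h
    exact congrFun ((Fintype.sum_eq_zero_iff_of_nonneg fun e => hpos a b e x y z).1 hAB) e
  set m : Bool → Bool → ℝ := fun e z => ∑ a, ∑ b, p a b e false false z
  have hbox : ∀ a b e x y z, p a b e x y z = m e z * prBox a b x y := fun a b e x y z =>
    IsNoSignaling.eq_mul_prBox (r := fun a b x y => p a b e x y z)
      ⟨fun b x x' y => hnsA b e x x' y z, fun a x y y' => hnsB a e x y y' z⟩
      (fun a b x y => hsupp a b e x y z) a b x y
  have hm : ∀ z, ∑ e, m e z = 1 := fun z => by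
    rw [Finset.sum_comm, ← hnorm false false z]
    exact Finset.sum_congr rfl fun a _ => Finset.sum_comm
  refine ⟨fun a b e x y z => ?_, ?_⟩
  · simp only [hbox a b, hbox _ _ e, ← Finset.sum_mul, ← Finset.mul_sum, hm, sum_sum_prBox]
    ring
  · simp only [hbox, ← Finset.mul_sum, sum_prBox_left]
    exact chsh_uniform_mul_eq_half hm
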